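/- arXiv:2112.10631 — 2 statements merged into one kernel-verified Lean document; each statement's English description precedes it below -/
import Mathlib

section
/- Let r ∈ C²((0,1]) ∩ C([0,1]) with r'(R) > 0 on (0,1] be a solution of the radial equilibrium equation with r(0) = 0. Then L = lim_{R→0⁺} r(R)/R exists and is finite, and consequently lim_{ε→0⁺} r(ε)ⁿ ln(r(ε)/ε) = 0; hence the modified energy Î(r) := lim_{ε→0⁺} [ ∫_ε¹ R^{n−1} Φ(r'(R), r(R)/R, …, r(R)/R) dR − (κ(n−1)/n) r(ε)ⁿ ln(r(ε)/ε) ] coincides (as a value in (−∞,∞]) with the original energy I(r) = ∫₀¹ R^{n−1} Φ(r'(R), r(R)/R, …, r(R)/R) dR. -/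
/-!
Write `q = r'`, `v = r / R` and `T(q, v)` for the radial Cauchy stress. The gap
`G = T(v, v) - T(q, v)` has the sign of `v - q`, and the equilibrium equation gives `G G' ≤ 0`,
so `G²` decreases on `(0, 1]`. Hence `G` has one sign near `0`, i.e. `v` is monotone there.
If `v` increases towards `0` (so `q ≤ v`), then `T` is monotone, so `h'(δ) ≤ T` stays bounded and
so does the determinant `δ = q v^{n-1}`; since `r(0) = 0`, the mean value theorem gives
`v(R) = q(c)` with `c < R`, whence `v(R)ⁿ ≤ δ(c)` is bounded. Either way `v` has a finite limit,
so `r(ε)ⁿ log(r(ε)/ε) = εⁿ vⁿ log v → 0`, and the correction term in the modified energy vanishes.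
-/

open Real MeasureTheory Filter Set
open scoped ENNReal NNReal

noncomputable section

/-- Radial stored energy `Φ(q, v, …, v) = (κ/n)(qⁿ + (n−1)vⁿ) + h(q v^{n−1})`,
the restriction of `Φ(v₁,…,vₙ) = (κ/n)(v₁ⁿ+⋯+vₙⁿ) + h(v₁⋯vₙ)` to points
`(q, v, …, v)`. -/
def Phi (n : ℕ) (κ : ℝ) (h : ℝ → ℝ) (q v : ℝ) : ℝ :=
  (κ / n) * (q ^ n + ((n : ℝ) - 1) * v ^ n) + h (q * v ^ (n - 1))

/-- `Φ_{,1}(q, v, …, v) = κ q^{n−1} + v^{n−1} h'(q v^{n−1})`. -/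
def Phi1 (n : ℕ) (κ : ℝ) (h' : ℝ → ℝ) (q v : ℝ) : ℝ :=
  κ * q ^ (n - 1) + v ^ (n - 1) * h' (q * v ^ (n - 1))

/-- `Φ_{,2}(q, v, …, v) = κ v^{n−1} + q v^{n−2} h'(q v^{n−1})`. -/
def Phi2 (n : ℕ) (κ : ℝ) (h' : ℝ → ℝ) (q v : ℝ) : ℝ :=
  κ * v ^ (n - 1) + q * v ^ (n - 2) * h' (q * v ^ (n - 1))

/-- Radial Cauchy stress `T(q,v) = v^{1−n} Φ_{,1}(q,v,…,v) = κ(q/v)^{n−1} + h'(q v^{n−1})`. -/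
def Tstress (n : ℕ) (κ : ℝ) (h' : ℝ → ℝ) (q v : ℝ) : ℝ :=
  κ * (q / v) ^ (n - 1) + h' (q * v ^ (n - 1))

/-- The determinant function `δ(R) = r'(R) (r(R)/R)^{n−1}`. -/
def del (n : ℕ) (r r' : ℝ → ℝ) (R : ℝ) : ℝ :=
  r' R * (r R / R) ^ (n - 1)

/-- Hypotheses on `h : (0,∞) → [0,∞)`: it is `C²` with derivative `h'` and second
derivative `h''`, `h'' > 0`, `h(d) → ∞` as `d → 0⁺`, `h(d)/d → ∞` as `d → ∞`,
`h'(d) → −∞` as `d → 0⁺` and `h'(d) → ∞` as `d → ∞`. -/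
structure GoodH (h h' h'' : ℝ → ℝ) : Prop where
  nonneg : ∀ d : ℝ, 0 < d → 0 ≤ h d
  deriv1 : ∀ d : ℝ, 0 < d → HasDerivAt h (h' d) d
  deriv2 : ∀ d : ℝ, 0 < d → HasDerivAt h' (h'' d) d
  cont2 : ContinuousOn h'' (Set.Ioi 0)
  hpp_pos : ∀ d : ℝ, 0 < d → 0 < h'' d
  lim_zero : Tendsto h (nhdsWithin 0 (Set.Ioi 0)) atTop
  lim_growth : Tendsto (fun d => h d / d) atTop atTop
  dlim_zero : Tendsto h' (nhdsWithin 0 (Set.Ioi 0)) atBot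
  dlim_top : Tendsto h' atTop atTop

/-- `r ∈ C²((0,1])`, with `r, r' > 0` on `(0,1]`, solving the radial equilibrium
equation `(d/dR)[R^{n−1} Φ_{,1}(r(R))] = (n−1) R^{n−2} Φ_{,2}(r(R))`. -/
structure RadialSol (n : ℕ) (κ : ℝ) (h' : ℝ → ℝ) (r r' r'' : ℝ → ℝ) : Prop where
  pos : ∀ R ∈ Set.Ioc (0:ℝ) 1, 0 < r R
  derivPos : ∀ R ∈ Set.Ioc (0:ℝ) 1, 0 < r' R
  hasDeriv : ∀ R ∈ Set.Ioc (0:ℝ) 1, HasDerivWithinAt r (r' R) (Set.Ioc 0 1) R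
  hasDeriv2 : ∀ R ∈ Set.Ioc (0:ℝ) 1, HasDerivWithinAt r' (r'' R) (Set.Ioc 0 1) R
  cont2 : ContinuousOn r'' (Set.Ioc 0 1)
  equil : ∀ R ∈ Set.Ioc (0:ℝ) 1,
    HasDerivWithinAt (fun s => s ^ (n - 1) * Phi1 n κ h' (r' s) (r s / s))
      (((n : ℝ) - 1) * R ^ (n - 2) * Phi2 n κ h' (r' R) (r R / R)) (Set.Ioc 0 1) R

open Topology

lemma monotoneOn_Ioo_of_hasDerivWithinAt_nonneg {f f' : ℝ → ℝ} {s : Set ℝ} {a b : ℝ}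
    (hsub : Ioo a b ⊆ s) (hf : ∀ x ∈ Ioo a b, HasDerivWithinAt f (f' x) s x)
    (hf'₀ : ∀ x ∈ Ioo a b, 0 ≤ f' x) : MonotoneOn f (Ioo a b) := by
  have hf' : ∀ x ∈ Ioo a b, HasDerivWithinAt f (f' x) (Ioo a b) x :=
    fun x hx => (hf x hx).mono hsub
  exact monotoneOn_of_hasDerivWithinAt_nonneg (convex_Ioo a b)
    (fun x hx => (hf' x hx).continuousWithinAt) (by simpa only [interior_Ioo])
    (by simpa only [interior_Ioo])

lemma antitoneOn_Ioo_of_hasDerivWithinAt_nonpos {f f' : ℝ → ℝ} {s : Set ℝ} {a b : ℝ}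
    (hsub : Ioo a b ⊆ s) (hf : ∀ x ∈ Ioo a b, HasDerivWithinAt f (f' x) s x)
    (hf'₀ : ∀ x ∈ Ioo a b, f' x ≤ 0) : AntitoneOn f (Ioo a b) := by
  have hf' : ∀ x ∈ Ioo a b, HasDerivWithinAt f (f' x) (Ioo a b) x :=
    fun x hx => (hf x hx).mono hsub
  exact antitoneOn_of_hasDerivWithinAt_nonpos (convex_Ioo a b)
    (fun x hx => (hf' x hx).continuousWithinAt) (by simpa only [interior_Ioo])
    (by simpa only [interior_Ioo])

lemma tendsto_pow_mul_log_div {f : ℝ → ℝ} {n : ℕ} (hn : n ≠ 0) {L : ℝ}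
    (hf : Tendsto (fun ε => f ε / ε) (𝓝[>] 0) (𝓝 L)) :
    Tendsto (fun ε => f ε ^ n * log (f ε / ε)) (𝓝[>] 0) (𝓝 0) := by
  -- `x ↦ xⁿ log x` is continuous on all of `ℝ` because `log 0 = 0`.
  have hcont : Continuous fun x : ℝ => x ^ (n - 1) * (x * log x) :=
    (continuous_pow _).mul continuous_mul_log
  have hpow : Tendsto (fun ε : ℝ => ε ^ n) (𝓝[>] 0) (𝓝 0) := by
    simpa [zero_pow hn] using
      ((continuous_pow n : Continuous fun x : ℝ => x ^ n).tendsto 0).mono_left nhdsWithin_le_nhds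
  refine (zero_mul (L ^ (n - 1) * (L * log L)) ▸ hpow.mul ((hcont.tendsto L).comp hf)).congr' ?_
  filter_upwards [self_mem_nhdsWithin] with ε (hε : 0 < ε)
  obtain ⟨m, rfl⟩ : ∃ m, n = m + 1 := ⟨n - 1, by omega⟩
  have := hε.ne'
  rw [Function.comp_apply, Nat.add_sub_cancel]
  generalize log (f ε / ε) = l
  rw [div_pow]
  field_simp
  ring

lemma tendsto_setIntegral_Ioc_nhdsGT {f : ℝ → ℝ} {a b : ℝ} (hab : a < b)
    (hf : IntegrableOn f (Ioc a b)) :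
    Tendsto (fun ε => ∫ x in Ioc ε b, f x) (𝓝[>] a) (𝓝 (∫ x in Ioc a b, f x)) := by
  have hc := intervalIntegral.continuousOn_primitive_interval_left (μ := volume) (f := f)
    (by rwa [uIcc_of_le hab.le, integrableOn_Icc_iff_integrableOn_Ioc]) a left_mem_uIcc
  rw [uIcc_of_le hab.le] at hc
  have hlim := (hc.mono Ioc_subset_Icc_self).tendsto
  rw [nhdsWithin_Ioc_eq_nhdsGT hab, intervalIntegral.integral_of_le hab.le] at hlim
  refine hlim.congr' ?_
  filter_upwards [Ioc_mem_nhdsGT hab] with x hx using intervalIntegral.integral_of_le hx.2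

lemma tendsto_setIntegral_Ioc_atTop_of_not_integrableOn {f : ℝ → ℝ} {a b : ℝ}
    (hf : ContinuousOn f (Ioc a b)) (hpos : ∀ x ∈ Ioc a b, 0 ≤ f x)
    (hnot : ¬ IntegrableOn f (Ioc a b)) :
    Tendsto (fun ε => ∫ x in Ioc ε b, f x) (𝓝[>] a) atTop := by
  have hint : ∀ ε, a < ε → IntegrableOn f (Ioc ε b) := fun ε hε =>
    (hf.mono fun x hx => ⟨hε.trans_le hx.1, hx.2⟩).integrableOn_Icc.mono_set Ioc_subset_Icc_self
  have hnonneg : ∀ ε, a < ε → ∀ x ∈ Ioc ε b, 0 ≤ f x := fun ε hε x hx =>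
    hpos x ⟨hε.trans hx.1, hx.2⟩
  have hbound : ∀ M, ∃ ε, a < ε ∧ M ≤ ∫ x in Ioc ε b, f x := by
    intro M
    by_contra! H
    have hpos_seq : ∀ k : ℕ, a < a + 1 / ((k : ℝ) + 1) :=
      fun k => lt_add_of_pos_right a Nat.one_div_pos_of_nat
    refine hnot (integrableOn_Ioc_of_intervalIntegral_norm_bounded_left (l := atTop) (I := M)
      (fun k => hint _ (hpos_seq k)) ?_ (Eventually.of_forall fun k => ?_))
    · simpa using tendsto_one_div_add_atTop_nhds_zero_nat.const_add a
    · rw [setIntegral_congr_fun measurableSet_Ioc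
        fun x hx => norm_of_nonneg (hnonneg _ (hpos_seq k) x hx)]
      exact (H _ (hpos_seq k)).le
  refine tendsto_atTop.2 fun M => ?_
  obtain ⟨ε₀, hε₀, hM⟩ := hbound M
  filter_upwards [Ioc_mem_nhdsGT hε₀] with ε hε
  exact hM.trans <| setIntegral_mono_set (hint ε hε.1)
    (ae_restrict_of_forall_mem measurableSet_Ioc (hnonneg ε hε.1))
    (Ioc_subset_Ioc_left hε.2).eventuallyLE

lemma IsPreconnected.forall_gt_or_forall_lt_of_ne {X α : Type*} [TopologicalSpace X]
    [LinearOrder α] [TopologicalSpace α] [OrderClosedTopology α] {s : Set X}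
    (hs : IsPreconnected s) {f : X → α} (hf : ContinuousOn f s) {c : α}
    (hne : ∀ x ∈ s, f x ≠ c) : (∀ x ∈ s, c < f x) ∨ (∀ x ∈ s, f x < c) := by
  by_contra! H
  obtain ⟨⟨a, ha, hfa⟩, ⟨b, hb, hfb⟩⟩ := H
  obtain ⟨x, hx, hfx⟩ := hs.intermediate_value ha hb hf ⟨hfa, hfb⟩
  exact hne x hx hfx

namespace GoodH

variable {h h' h'' : ℝ → ℝ}

lemma strictMonoOn_deriv (hh : GoodH h h' h'') : StrictMonoOn h' (Ioi 0) :=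
  strictMonoOn_of_hasDerivWithinAt_pos (convex_Ioi 0)
    (fun d hd => (hh.deriv2 d hd).continuousAt.continuousWithinAt)
    (fun d hd => (hh.deriv2 d (by simpa using hd)).hasDerivWithinAt)
    (fun d hd => hh.hpp_pos d (by simpa using hd))

lemma continuousOn (hh : GoodH h h' h'') : ContinuousOn h (Ioi 0) :=
  fun d hd => (hh.deriv1 d hd).continuousAt.continuousWithinAt

end GoodH

section Stress

variable {n : ℕ} {κ : ℝ} {h h' h'' : ℝ → ℝ} {q v : ℝ}

lemma Tstress_self (hn : n ≠ 0) (hv : v ≠ 0) : Tstress n κ h' v v = κ + h' (v ^ n) := by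
  rw [Tstress, div_self hv, one_pow, mul_one, ← pow_succ', Nat.sub_add_cancel (by omega)]

lemma Tstress_lt_Tstress (hn : 2 ≤ n) (hκ : 0 < κ) (hh' : StrictMonoOn h' (Ioi 0)) {q₁ q₂ : ℝ}
    (hq₁ : 0 < q₁) (hv : 0 < v) (hq : q₁ < q₂) : Tstress n κ h' q₁ v < Tstress n κ h' q₂ v := by
  have hq₂ : 0 < q₂ := hq₁.trans hq
  have hratio : (q₁ / v) ^ (n - 1) < (q₂ / v) ^ (n - 1) :=
    pow_lt_pow_left₀ (div_lt_div_of_pos_right hq hv) (by positivity) (by omega)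
  have hdet : h' (q₁ * v ^ (n - 1)) < h' (q₂ * v ^ (n - 1)) :=
    hh' (mem_Ioi.2 (by positivity)) (mem_Ioi.2 (by positivity)) (by gcongr)
  exact add_lt_add (mul_lt_mul_of_pos_left hratio hκ) hdet

def stressGap (n : ℕ) (κ : ℝ) (h' : ℝ → ℝ) (q v : ℝ) : ℝ :=
  Tstress n κ h' v v - Tstress n κ h' q v

lemma stressGap_pos (hn : 2 ≤ n) (hκ : 0 < κ) (hh' : StrictMonoOn h' (Ioi 0))
    (hq : 0 < q) (hqv : q < v) : 0 < stressGap n κ h' q v :=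
  sub_pos.2 (Tstress_lt_Tstress hn hκ hh' hq (hq.trans hqv) hqv)

lemma stressGap_neg (hn : 2 ≤ n) (hκ : 0 < κ) (hh' : StrictMonoOn h' (Ioi 0))
    (hv : 0 < v) (hvq : v < q) : stressGap n κ h' q v < 0 :=
  sub_neg.2 (Tstress_lt_Tstress hn hκ hh' hv hv hvq)

lemma le_of_stressGap_nonneg (hn : 2 ≤ n) (hκ : 0 < κ) (hh' : StrictMonoOn h' (Ioi 0))
    (hv : 0 < v) (hG : 0 ≤ stressGap n κ h' q v) : q ≤ v :=
  not_lt.1 fun hvq => (stressGap_neg hn hκ hh' hv hvq).not_ge hG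

lemma le_of_stressGap_nonpos (hn : 2 ≤ n) (hκ : 0 < κ) (hh' : StrictMonoOn h' (Ioi 0))
    (hq : 0 < q) (hG : stressGap n κ h' q v ≤ 0) : v ≤ q :=
  not_lt.1 fun hqv => (stressGap_pos hn hκ hh' hq hqv).not_ge hG

def stressGapDeriv (n : ℕ) (κ : ℝ) (h'' : ℝ → ℝ) (q v R : ℝ) : ℝ :=
  h'' (v ^ n) * (n * v ^ (n - 1)) * ((q - v) / R) - ((n : ℝ) - 1) * κ / R * (1 - (q / v) ^ n)

lemma stressGap_mul_stressGapDeriv_nonpos (hh : GoodH h h' h'') (hn : 2 ≤ n) (hκ : 0 < κ)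
    {R : ℝ} (hq : 0 < q) (hv : 0 < v) (hR : 0 < R) :
    stressGap n κ h' q v * stressGapDeriv n κ h'' q v R ≤ 0 := by
  have hA : 0 < h'' (v ^ n) * (n * v ^ (n - 1)) :=
    mul_pos (hh.hpp_pos _ (by positivity)) (by positivity)
  have hB : 0 < ((n : ℝ) - 1) * κ / R := by
    have : (2 : ℝ) ≤ n := by exact_mod_cast hn
    have : (0 : ℝ) < n - 1 := by linarith
    positivity
  rcases lt_trichotomy q v with hqv | rfl | hvq
  · have hpow : (q / v) ^ n < 1 := pow_lt_one₀ (by positivity) ((div_lt_one hv).2 hqv) (by omega)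
    have hdiff : (q - v) / R < 0 := div_neg_of_neg_of_pos (by linarith) hR
    refine (mul_neg_of_pos_of_neg (stressGap_pos hn hκ hh.strictMonoOn_deriv hq hqv) ?_).le
    rw [stressGapDeriv]
    nlinarith [mul_neg_of_pos_of_neg hA hdiff, mul_pos hB (sub_pos.2 hpow)]
  · simp [stressGap]
  · have hpow : 1 < (q / v) ^ n := one_lt_pow₀ ((one_lt_div hv).2 hvq) (by omega)
    have hdiff : 0 < (q - v) / R := div_pos (by linarith) hR
    refine (mul_neg_of_neg_of_pos (stressGap_neg hn hκ hh.strictMonoOn_deriv hv hvq) ?_).le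
    rw [stressGapDeriv]
    nlinarith [mul_pos hA hdiff, mul_neg_of_pos_of_neg hB (sub_neg.2 hpow)]

lemma Phi_nonneg (hh : ∀ d, 0 < d → 0 ≤ h d) (hn : 1 ≤ n) (hκ : 0 ≤ κ) (hq : 0 < q)
    (hv : 0 < v) : 0 ≤ Phi n κ h q v := by
  have : (1 : ℝ) ≤ n := by exact_mod_cast hn
  have : (0 : ℝ) ≤ n - 1 := by linarith
  exact add_nonneg (by positivity) (hh _ (by positivity))

end Stress

namespace RadialSol

variable {n : ℕ} {κ : ℝ} {h h' h'' : ℝ → ℝ} {r r' r'' : ℝ → ℝ}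

lemma div_pos_of_mem (hr : RadialSol n κ h' r r' r'') {R : ℝ} (hR : R ∈ Ioc (0:ℝ) 1) :
    0 < r R / R :=
  div_pos (hr.pos R hR) hR.1

lemma hasDerivWithinAt_div (hr : RadialSol n κ h' r r' r'') {R : ℝ} (hR : R ∈ Ioc (0:ℝ) 1) :
    HasDerivWithinAt (fun s => r s / s) ((r' R - r R / R) / R) (Ioc 0 1) R := by
  have hR0 : R ≠ 0 := hR.1.ne'
  refine ((hr.hasDeriv R hR).fun_div (hasDerivWithinAt_id R _) hR0).congr_deriv ?_
  simp only [id, mul_one]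
  field_simp

/-- `T = R^{n-1} Φ_{,1} / r^{n-1}`, so the equilibrium equation computes its derivative. -/
lemma hasDerivWithinAt_Tstress (hr : RadialSol n κ h' r r' r'') (hn : 2 ≤ n) {R : ℝ}
    (hR : R ∈ Ioc (0:ℝ) 1) :
    HasDerivWithinAt (fun s => Tstress n κ h' (r' s) (r s / s))
      (((n : ℝ) - 1) * κ / R * (1 - (r' R / (r R / R)) ^ n)) (Ioc 0 1) R := by
  obtain ⟨m, rfl⟩ : ∃ m, n = m + 2 := ⟨n - 2, by omega⟩
  have hR0 : 0 < R := hR.1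
  have hrR : 0 < r R := hr.pos R hR
  have hquot := (hr.equil R hR).div ((hr.hasDeriv R hR).fun_pow (m + 1)) (pow_ne_zero _ hrR.ne')
  have hT : ∀ s ∈ Ioc (0:ℝ) 1, Tstress (m + 2) κ h' (r' s) (r s / s)
      = s ^ (m + 1) * Phi1 (m + 2) κ h' (r' s) (r s / s) / r s ^ (m + 1) := by
    intro s hs
    have := hr.pos s hs
    have := hs.1
    simp only [Tstress, Phi1, show m + 2 - 1 = m + 1 from rfl, div_pow]
    field_simp
  refine (hquot.congr hT (hT R hR)).congr_deriv ?_
  simp only [Phi1, Phi2, show m + 2 - 1 = m + 1 from rfl, show m + 2 - 2 = m from rfl,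
    Nat.add_sub_cancel, div_pow]
  push_cast
  field_simp
  ring

lemma hasDerivWithinAt_stressGap (hr : RadialSol n κ h' r r' r'') (hh : GoodH h h' h'')
    (hn : 2 ≤ n) {R : ℝ} (hR : R ∈ Ioc (0:ℝ) 1) :
    HasDerivWithinAt (fun s => stressGap n κ h' (r' s) (r s / s))
      (stressGapDeriv n κ h'' (r' R) (r R / R) R) (Ioc 0 1) R := by
  have hself : ∀ s ∈ Ioc (0:ℝ) 1, stressGap n κ h' (r' s) (r s / s)
      = κ + h' ((r s / s) ^ n) - Tstress n κ h' (r' s) (r s / s) := fun s hs => by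
    rw [stressGap, Tstress_self (by omega) (hr.div_pos_of_mem hs).ne']
  have hdet := (hh.deriv2 _ (pow_pos (hr.div_pos_of_mem hR) n)).comp_hasDerivWithinAt R
    ((hr.hasDerivWithinAt_div hR).fun_pow n)
  refine ((hdet.const_add κ).sub (hr.hasDerivWithinAt_Tstress hn hR)).congr hself
    (hself R hR) |>.congr_deriv ?_
  rw [stressGapDeriv]
  ring

lemma antitoneOn_sq_stressGap (hr : RadialSol n κ h' r r' r'') (hh : GoodH h h' h'')
    (hn : 2 ≤ n) (hκ : 0 < κ) :
    AntitoneOn (fun R => stressGap n κ h' (r' R) (r R / R) ^ 2) (Ioc 0 1) := by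
  have hG := fun R (hR : R ∈ Ioc (0:ℝ) 1) => (hr.hasDerivWithinAt_stressGap hh hn hR).fun_pow 2
  refine antitoneOn_of_hasDerivWithinAt_nonpos (f' := fun R => (2 : ℕ) *
      stressGap n κ h' (r' R) (r R / R) ^ (2 - 1) * stressGapDeriv n κ h'' (r' R) (r R / R) R)
    (convex_Ioc 0 1)
    (fun R hR => (hG R hR).continuousWithinAt) (fun R hR => ?_) (fun R hR => ?_)
  · rw [interior_Ioc] at hR ⊢
    exact (hG R (Ioo_subset_Ioc_self hR)).mono Ioo_subset_Ioc_self
  · rw [interior_Ioc] at hR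
    have hR' := Ioo_subset_Ioc_self hR
    have := stressGap_mul_stressGapDeriv_nonpos hh hn hκ (hr.derivPos R hR')
      (hr.div_pos_of_mem hR') hR.1
    simp only [Nat.cast_ofNat, Nat.add_one_sub_one, pow_one]
    nlinarith

lemma exists_Ioo_deriv_le_div_or_div_le_deriv (hr : RadialSol n κ h' r r' r'')
    (hh : GoodH h h' h'') (hn : 2 ≤ n) (hκ : 0 < κ) :
    ∃ ρ ∈ Ioc (0:ℝ) 1,
      (∀ R ∈ Ioo 0 ρ, r' R ≤ r R / R) ∨ (∀ R ∈ Ioo 0 ρ, r R / R ≤ r' R) := by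
  have hmono := hh.strictMonoOn_deriv
  by_cases hzero : ∀ R ∈ Ioc (0:ℝ) 1, stressGap n κ h' (r' R) (r R / R) = 0
  · refine ⟨1, right_mem_Ioc.2 one_pos, Or.inl fun R hR => ?_⟩
    have hR' := Ioo_subset_Ioc_self hR
    exact le_of_stressGap_nonneg hn hκ hmono (hr.div_pos_of_mem hR') (hzero R hR').ge
  push Not at hzero
  obtain ⟨x₀, hx₀, hGx₀⟩ := hzero
  have hsub : Ioo 0 x₀ ⊆ Ioc (0:ℝ) 1 := fun R hR => ⟨hR.1, hR.2.le.trans hx₀.2⟩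
  have hne : ∀ R ∈ Ioo 0 x₀, stressGap n κ h' (r' R) (r R / R) ≠ 0 := fun R hR hGR =>
    hGx₀ (by simpa [hGR] using hr.antitoneOn_sq_stressGap hh hn hκ (hsub hR) hx₀ hR.2.le)
  have hcont : ContinuousOn (fun R => stressGap n κ h' (r' R) (r R / R)) (Ioo 0 x₀) := fun R hR =>
    (hr.hasDerivWithinAt_stressGap hh hn (hsub hR)).continuousWithinAt.mono hsub
  refine ⟨x₀, hx₀, ?_⟩
  rcases isPreconnected_Ioo.forall_gt_or_forall_lt_of_ne hcont hne with hpos | hneg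
  · exact Or.inl fun R hR =>
      le_of_stressGap_nonneg hn hκ hmono (hr.div_pos_of_mem (hsub hR)) (hpos R hR).le
  · exact Or.inr fun R hR =>
      le_of_stressGap_nonpos hn hκ hmono (hr.derivPos R (hsub hR)) (hneg R hR).le

lemma monotoneOn_div (hr : RadialSol n κ h' r r' r'') {ρ : ℝ} (hρ : ρ ≤ 1)
    (hge : ∀ R ∈ Ioo 0 ρ, r R / R ≤ r' R) : MonotoneOn (fun R => r R / R) (Ioo 0 ρ) := by
  have hsub : Ioo 0 ρ ⊆ Ioc (0:ℝ) 1 := Ioo_subset_Ioc_self.trans (Ioc_subset_Ioc_right hρ)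
  exact monotoneOn_Ioo_of_hasDerivWithinAt_nonneg hsub
    (fun R hR => hr.hasDerivWithinAt_div (hsub hR))
    (fun R hR => div_nonneg (sub_nonneg.2 (hge R hR)) hR.1.le)

lemma antitoneOn_div (hr : RadialSol n κ h' r r' r'') {ρ : ℝ} (hρ : ρ ≤ 1)
    (hle : ∀ R ∈ Ioo 0 ρ, r' R ≤ r R / R) : AntitoneOn (fun R => r R / R) (Ioo 0 ρ) := by
  have hsub : Ioo 0 ρ ⊆ Ioc (0:ℝ) 1 := Ioo_subset_Ioc_self.trans (Ioc_subset_Ioc_right hρ)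
  exact antitoneOn_Ioo_of_hasDerivWithinAt_nonpos hsub
    (fun R hR => hr.hasDerivWithinAt_div (hsub hR))
    (fun R hR => div_nonpos_of_nonpos_of_nonneg (sub_nonpos.2 (hle R hR)) hR.1.le)

lemma monotoneOn_Tstress (hr : RadialSol n κ h' r r' r'') (hn : 2 ≤ n) (hκ : 0 ≤ κ) {ρ : ℝ}
    (hρ : ρ ≤ 1) (hle : ∀ R ∈ Ioo 0 ρ, r' R ≤ r R / R) :
    MonotoneOn (fun R => Tstress n κ h' (r' R) (r R / R)) (Ioo 0 ρ) := by
  have hsub : Ioo 0 ρ ⊆ Ioc (0:ℝ) 1 := Ioo_subset_Ioc_self.trans (Ioc_subset_Ioc_right hρ)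
  refine monotoneOn_Ioo_of_hasDerivWithinAt_nonneg hsub
    (fun R hR => hr.hasDerivWithinAt_Tstress hn (hsub hR)) (fun R hR => ?_)
  have hv := hr.div_pos_of_mem (hsub hR)
  have hpow : (r' R / (r R / R)) ^ n ≤ 1 :=
    pow_le_one₀ (div_pos (hr.derivPos R (hsub hR)) hv).le ((div_le_one hv).2 (hle R hR))
  have : (0 : ℝ) ≤ n - 1 := by
    have : (2 : ℝ) ≤ n := by exact_mod_cast hn
    linarith
  have := hR.1
  exact mul_nonneg (by positivity) (sub_nonneg.2 hpow)

lemma h'_del_le_Tstress (hr : RadialSol n κ h' r r' r'') (hκ : 0 ≤ κ) {R : ℝ}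
    (hR : R ∈ Ioc (0:ℝ) 1) : h' (del n r r' R) ≤ Tstress n κ h' (r' R) (r R / R) := by
  have := hr.derivPos R hR
  have := hr.div_pos_of_mem hR
  exact le_add_of_nonneg_left (by positivity)

lemma exists_deriv_eq_div (hr : RadialSol n κ h' r r' r'') (hcont : ContinuousOn r (Icc 0 1))
    (h0 : r 0 = 0) {R : ℝ} (hR : R ∈ Ioc (0:ℝ) 1) : ∃ c ∈ Ioo 0 R, r' c = r R / R := by
  obtain ⟨c, hc, hslope⟩ := exists_hasDerivAt_eq_slope r r' hR.1
    (hcont.mono (Icc_subset_Icc_right hR.2))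
    (fun x hx => (hr.hasDeriv x ⟨hx.1, hx.2.le.trans hR.2⟩).hasDerivAt
      (Ioc_mem_nhds hx.1 (hx.2.trans_le hR.2)))
  exact ⟨c, hc, by rwa [h0, sub_zero, sub_zero] at hslope⟩

/-- Where `r' ≤ r / R`, the stress controls the determinant `del`, and the mean value theorem
`r(R)/R = r'(c)` with `c < R` turns this into `(r(R)/R)ⁿ ≤ del c`. -/
lemma bddAbove_div_of_deriv_le (hr : RadialSol n κ h' r r' r'') (hh : GoodH h h' h'')
    (hn : 2 ≤ n) (hκ : 0 ≤ κ) (hcont : ContinuousOn r (Icc 0 1)) (h0 : r 0 = 0) {ρ : ℝ}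
    (hρ : ρ ∈ Ioc (0:ℝ) 1) (hle : ∀ R ∈ Ioo 0 ρ, r' R ≤ r R / R) :
    BddAbove ((fun R => r R / R) '' Ioo 0 (ρ / 2)) := by
  have hsub : Ioo 0 ρ ⊆ Ioc (0:ℝ) 1 := Ioo_subset_Ioc_self.trans (Ioc_subset_Ioc_right hρ.2)
  have hhalf : Ioo 0 (ρ / 2) ⊆ Ioo 0 ρ := Ioo_subset_Ioo_right (half_le_self hρ.1.le)
  have hρ' : ρ / 2 ∈ Ioo 0 ρ := ⟨half_pos hρ.1, half_lt_self hρ.1⟩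
  obtain ⟨D, hD⟩ := eventually_atTop.1
    (hh.dlim_top.eventually_gt_atTop (Tstress n κ h' (r' (ρ / 2)) (r (ρ / 2) / (ρ / 2))))
  have hdel : ∀ R ∈ Ioo 0 (ρ / 2), del n r r' R < D := by
    intro R hR
    by_contra! hDR
    have hT := hr.monotoneOn_Tstress hn hκ hρ.2 hle (hhalf hR) hρ' hR.2.le
    exact ((hD _ hDR).trans_le (hr.h'_del_le_Tstress hκ (hsub (hhalf hR)))).not_ge hT
  refine ⟨max 1 D, ?_⟩
  rintro _ ⟨R, hR, rfl⟩
  obtain ⟨c, hc, hcR⟩ := hr.exists_deriv_eq_div hcont h0 (hsub (hhalf hR))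
  have hc' : c ∈ Ioo 0 (ρ / 2) := ⟨hc.1, hc.2.trans hR.2⟩
  have hpow : (r R / R) ^ n < D := calc
    (r R / R) ^ n = r' c * (r R / R) ^ (n - 1) := by
      rw [hcR, ← pow_succ', Nat.sub_add_cancel (by omega)]
    _ ≤ r' c * (r c / c) ^ (n - 1) :=
      mul_le_mul_of_nonneg_left (pow_le_pow_left₀ (hr.div_pos_of_mem (hsub (hhalf hR))).le
        (hr.antitoneOn_div hρ.2 hle (hhalf hc') (hhalf hR) hc.2.le) _)
        (hr.derivPos c (hsub (hhalf hc'))).le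
    _ < D := hdel c hc'
  rcases le_or_gt (r R / R) 1 with h1 | h1
  · exact h1.trans (le_max_left _ _)
  · exact ((le_self_pow₀ h1.le (by omega)).trans hpow.le).trans (le_max_right _ _)

lemma exists_tendsto_div (hr : RadialSol n κ h' r r' r'') (hh : GoodH h h' h'') (hn : 2 ≤ n)
    (hκ : 0 < κ) (hcont : ContinuousOn r (Icc 0 1)) (h0 : r 0 = 0) :
    ∃ L, Tendsto (fun R => r R / R) (𝓝[>] 0) (𝓝 L) := by
  obtain ⟨ρ, hρ, hle | hge⟩ := hr.exists_Ioo_deriv_le_div_or_div_le_deriv hh hn hκ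
  · exact ⟨_, ((hr.antitoneOn_div hρ.2 hle).mono (Ioo_subset_Ioo_right (half_le_self hρ.1.le)))
      |>.tendsto_nhdsWithin_Ioo_right (nonempty_Ioo.2 (half_pos hρ.1))
        (hr.bddAbove_div_of_deriv_le hh hn hκ.le hcont h0 hρ hle)⟩
  · refine ⟨_, (hr.monotoneOn_div hρ.2 hge).tendsto_nhdsWithin_Ioo_right (nonempty_Ioo.2 hρ.1)
      ⟨0, ?_⟩⟩
    rintro _ ⟨R, hR, rfl⟩
    exact (hr.div_pos_of_mem ⟨hR.1, hR.2.le.trans hρ.2⟩).le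

lemma energyDensity_nonneg (hr : RadialSol n κ h' r r' r'') (hh : ∀ d, 0 < d → 0 ≤ h d)
    (hn : 1 ≤ n) (hκ : 0 ≤ κ) {R : ℝ} (hR : R ∈ Ioc (0:ℝ) 1) :
    0 ≤ R ^ (n - 1) * Phi n κ h (r' R) (r R / R) :=
  mul_nonneg (pow_nonneg hR.1.le _)
    (Phi_nonneg hh hn hκ (hr.derivPos R hR) (hr.div_pos_of_mem hR))

lemma continuousOn_energyDensity (hr : RadialSol n κ h' r r' r'') (hh : ContinuousOn h (Ioi 0)) :
    ContinuousOn (fun R => R ^ (n - 1) * Phi n κ h (r' R) (r R / R)) (Ioc 0 1) := by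
  have hr₀ : ContinuousOn r (Ioc 0 1) := fun R hR => (hr.hasDeriv R hR).continuousWithinAt
  have hr₁ : ContinuousOn r' (Ioc 0 1) := fun R hR => (hr.hasDeriv2 R hR).continuousWithinAt
  have hv : ContinuousOn (fun R => r R / R) (Ioc 0 1) :=
    hr₀.div continuousOn_id fun R hR => hR.1.ne'
  have hdet : ContinuousOn (fun R => h (r' R * (r R / R) ^ (n - 1))) (Ioc 0 1) :=
    hh.comp (hr₁.mul (hv.pow _)) fun R hR =>
      mul_pos (hr.derivPos R hR) (pow_pos (hr.div_pos_of_mem hR) _)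
  exact (continuousOn_pow _).mul
    ((continuousOn_const.mul ((hr₁.pow n).add (continuousOn_const.mul (hv.pow n)))).add hdet)

end RadialSol

/-- for a non-cavitating solution (`r(0) = 0`), `r(R)/R` has a finite
limit as `R → 0⁺`, the boundary correction tends to `0`, and the modified energy
coincides with the original energy (as a value in `(−∞,∞]`). -/
theorem stmt9 (n : ℕ) (hn : 2 ≤ n) (κ : ℝ) (hκ : 0 < κ)
    (h h' h'' : ℝ → ℝ) (hh : GoodH h h' h'')
    (r r' r'' : ℝ → ℝ) (hr : RadialSol n κ h' r r' r'')
    (hcont : ContinuousOn r (Set.Icc 0 1)) (h0 : r 0 = 0) :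
    (∃ L : ℝ, Tendsto (fun R => r R / R) (nhdsWithin 0 (Set.Ioi 0)) (nhds L)) ∧
    Tendsto (fun ε => (r ε) ^ n * Real.log (r ε / ε)) (nhdsWithin 0 (Set.Ioi 0)) (nhds 0) ∧
    (IntegrableOn (fun R => R ^ (n - 1) * Phi n κ h (r' R) (r R / R)) (Set.Ioc 0 1) →
      Tendsto (fun ε => (∫ R in Set.Ioc ε 1, R ^ (n - 1) * Phi n κ h (r' R) (r R / R))
          - κ * ((n:ℝ) - 1) / n * (r ε) ^ n * Real.log (r ε / ε))
        (nhdsWithin 0 (Set.Ioi 0))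
        (nhds (∫ R in Set.Ioc (0:ℝ) 1, R ^ (n - 1) * Phi n κ h (r' R) (r R / R)))) ∧
    (¬ IntegrableOn (fun R => R ^ (n - 1) * Phi n κ h (r' R) (r R / R)) (Set.Ioc 0 1) →
      Tendsto (fun ε => (∫ R in Set.Ioc ε 1, R ^ (n - 1) * Phi n κ h (r' R) (r R / R))
          - κ * ((n:ℝ) - 1) / n * (r ε) ^ n * Real.log (r ε / ε))
        (nhdsWithin 0 (Set.Ioi 0)) atTop) := by
  obtain ⟨L, hL⟩ := hr.exists_tendsto_div hh hn hκ hcont h0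
  have hlog := tendsto_pow_mul_log_div (by omega : n ≠ 0) hL
  have hcorr : Tendsto (fun ε => κ * ((n : ℝ) - 1) / n * r ε ^ n * log (r ε / ε)) (𝓝[>] 0)
      (𝓝 0) := by
    simpa [mul_assoc] using hlog.const_mul (κ * ((n : ℝ) - 1) / n)
  refine ⟨⟨L, hL⟩, hlog, fun hint => ?_, fun hint => ?_⟩
  · simpa using (tendsto_setIntegral_Ioc_nhdsGT one_pos hint).sub hcorr
  · simpa [sub_eq_add_neg] using (tendsto_setIntegral_Ioc_atTop_of_not_integrableOn
      (hr.continuousOn_energyDensity hh.continuousOn)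
      (fun R hR => hr.energyDensity_nonneg hh.nonneg (by omega) hκ.le hR) hint).atTop_add
      hcorr.neg

end
end

section
/- Let r ∈ C²((0,1]) with r'(R) > 0 be a solution of the modified equilibrium equation (d/dR)[R^{n−1} Φ̂_{,1}(r(R))] = (n−1) R^{n−2} Φ̂_{,2}(r(R)). Then the map R ↦ T̂(r(R)) is C¹ on (0,1] and (d/dR) T̂(r(R)) = (n−1)κ (r'(R)/r(R)) ( 1 − (r'(R))^{n−1} / (r(R)/R)^{n−1} ). In particular, if r extends continuously to [0,1] with r(0) > 0 and δ(R) = r'(R)(r(R)/R)^{n−1} is bounded, then T̂(r(·)) is monotone increasing on (0,1]. -/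
open Real MeasureTheory Filter Set
open scoped ENNReal NNReal

noncomputable section

/-- Modified radial stored energy
`Φ̂(q,v,…,v) = (κ/n)qⁿ + h(q v^{n−1}) + κ q v^{n−1}((n−1)/n + ln(v^{n−1}))`. -/
def PhiHat (n : ℕ) (κ : ℝ) (h : ℝ → ℝ) (q v : ℝ) : ℝ :=
  (κ / n) * q ^ n + h (q * v ^ (n - 1)) +
    κ * (q * v ^ (n - 1)) * (((n : ℝ) - 1) / n + ((n : ℝ) - 1) * Real.log v)

/-- `Φ̂_{,1}(q,v,…,v) = κ q^{n−1} + v^{n−1} h'(q v^{n−1}) + κ v^{n−1}((n−1)/n + (n−1) ln v)`. -/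
def PhiHat1 (n : ℕ) (κ : ℝ) (h' : ℝ → ℝ) (q v : ℝ) : ℝ :=
  κ * q ^ (n - 1) + v ^ (n - 1) * h' (q * v ^ (n - 1)) +
    κ * v ^ (n - 1) * (((n : ℝ) - 1) / n + ((n : ℝ) - 1) * Real.log v)

/-- `Φ̂_{,2}(q,v,…,v) = q v^{n−2}(h'(q v^{n−1}) + κ + κ(n−1)(1/n + ln v))`. -/
def PhiHat2 (n : ℕ) (κ : ℝ) (h' : ℝ → ℝ) (q v : ℝ) : ℝ :=
  q * v ^ (n - 2) *
    (h' (q * v ^ (n - 1)) + κ + κ * (((n : ℝ) - 1) * (1 / n + Real.log v)))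

/-- Modified radial Cauchy stress
`T̂(q,v) = κ(q/v)^{n−1} + h'(q v^{n−1}) + (n−1)κ(1/n + ln v)`. -/
def THat (n : ℕ) (κ : ℝ) (h' : ℝ → ℝ) (q v : ℝ) : ℝ :=
  κ * (q / v) ^ (n - 1) + h' (q * v ^ (n - 1)) +
    ((n : ℝ) - 1) * κ * (1 / n + Real.log v)

/-- `r ∈ C²((0,1])`, with `r, r' > 0` on `(0,1]`, solving the modified radial
equilibrium equation `(d/dR)[R^{n−1} Φ̂_{,1}(r(R))] = (n−1) R^{n−2} Φ̂_{,2}(r(R))`. -/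
structure ModRadialSol (n : ℕ) (κ : ℝ) (h' : ℝ → ℝ) (r r' r'' : ℝ → ℝ) : Prop where
  pos : ∀ R ∈ Set.Ioc (0:ℝ) 1, 0 < r R
  derivPos : ∀ R ∈ Set.Ioc (0:ℝ) 1, 0 < r' R
  hasDeriv : ∀ R ∈ Set.Ioc (0:ℝ) 1, HasDerivWithinAt r (r' R) (Set.Ioc 0 1) R
  hasDeriv2 : ∀ R ∈ Set.Ioc (0:ℝ) 1, HasDerivWithinAt r' (r'' R) (Set.Ioc 0 1) R
  cont2 : ContinuousOn r'' (Set.Ioc 0 1)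
  equil : ∀ R ∈ Set.Ioc (0:ℝ) 1,
    HasDerivWithinAt (fun s => s ^ (n - 1) * PhiHat1 n κ h' (r' s) (r s / s))
      (((n : ℝ) - 1) * R ^ (n - 2) * PhiHat2 n κ h' (r' R) (r R / R)) (Set.Ioc 0 1) R


/-!
Since `R^{n-1} Φ̂_{,1} = r^{n-1} T̂`, the equilibrium equation prescribes the derivative of
`r^{n-1} T̂(r(·))`, and the quotient rule gives the formula for `(d/dR) T̂(r(R))`. Its sign is
that of `r/R - r'`. This is positive near `0`, because `r/R → ∞` there while
`δ = r' (r/R)^{n-1}` stays bounded. It can never become negative: on an interval `[c, R₀]`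
with `r' ≤ r/R` at `c` and `r' > r/R` on `(c, R₀]`, `T̂(r(·))` decreases while `r/R` increases,
but `T̂ = κ (q/v)^{n-1} + h'(q v^{n-1}) + (n-1) κ (1/n + ln v)` is strictly larger at
`(q, v) = (r'(R₀), r(R₀)/R₀)` than at `(r'(c), r(c)/c)`.
-/

open Topology

lemma exists_last_le_of_continuousOn {f g : ℝ → ℝ} {a b : ℝ} (hab : a ≤ b)
    (hf : ContinuousOn f (Icc a b)) (hg : ContinuousOn g (Icc a b)) (ha : f a ≤ g a) :
    ∃ c ∈ Icc a b, f c ≤ g c ∧ ∀ t ∈ Ioc c b, g t < f t := by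
  set S := {x ∈ Icc a b | f x ≤ g x}
  have hS : IsClosed S := isClosed_Icc.isClosed_le hf hg
  have hbdd : BddAbove S := ⟨b, fun x hx => hx.1.2⟩
  obtain ⟨hcI, hc⟩ := hS.csSup_mem ⟨a, ⟨left_mem_Icc.2 hab, ha⟩⟩ hbdd
  refine ⟨sSup S, hcI, hc, fun t ht => not_le.1 fun hle => ?_⟩
  exact ht.1.not_ge (le_csSup hbdd ⟨⟨hcI.1.trans ht.1.le, ht.2⟩, hle⟩)

lemma monotoneOn_of_hasDerivWithinAt_of_nonneg {D : Set ℝ} (hD : Convex ℝ D) {f f' : ℝ → ℝ}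
    (hf : ∀ x ∈ D, HasDerivWithinAt f (f' x) D x) (hf' : ∀ x ∈ interior D, 0 ≤ f' x) :
    MonotoneOn f D :=
  monotoneOn_of_hasDerivWithinAt_nonneg hD (fun x hx => (hf x hx).continuousWithinAt)
    (fun x hx => (hf x (interior_subset hx)).mono interior_subset) hf'

lemma antitoneOn_of_hasDerivWithinAt_of_nonpos {D : Set ℝ} (hD : Convex ℝ D) {f f' : ℝ → ℝ}
    (hf : ∀ x ∈ D, HasDerivWithinAt f (f' x) D x) (hf' : ∀ x ∈ interior D, f' x ≤ 0) :
    AntitoneOn f D :=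
  antitoneOn_of_hasDerivWithinAt_nonpos hD (fun x hx => (hf x hx).continuousWithinAt)
    (fun x hx => (hf x (interior_subset hx)).mono interior_subset) hf'

lemma GoodH.strictMonoOn_deriv_s13 {h h' h'' : ℝ → ℝ} (hh : GoodH h h' h'') :
    StrictMonoOn h' (Ioi 0) := by
  refine strictMonoOn_of_hasDerivWithinAt_pos (convex_Ioi 0)
    (fun d hd => (hh.deriv2 d hd).continuousAt.continuousWithinAt) (fun d hd => ?_)
    (fun d hd => hh.hpp_pos d (interior_subset hd))
  exact (hh.deriv2 d (interior_subset hd)).hasDerivWithinAt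

lemma PhiHat1_eq_pow_mul_THat (n : ℕ) (κ : ℝ) (h' : ℝ → ℝ) (q : ℝ) {v : ℝ} (hv : v ≠ 0) :
    PhiHat1 n κ h' q v = v ^ (n - 1) * THat n κ h' q v := by
  simp only [PhiHat1, THat, div_pow]
  field_simp

lemma THat_lt_THat {n : ℕ} (hn : 1 ≤ n) {κ : ℝ} (hκ : 0 < κ) {h' : ℝ → ℝ}
    (hh' : StrictMonoOn h' (Ioi 0)) {q₁ v₁ q₂ v₂ : ℝ} (hq₁ : 0 < q₁) (hq₁v₁ : q₁ ≤ v₁)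
    (hv : v₁ ≤ v₂) (hv₂q₂ : v₂ < q₂) :
    THat n κ h' q₁ v₁ < THat n κ h' q₂ v₂ := by
  have hv₁ : 0 < v₁ := hq₁.trans_le hq₁v₁
  have hv₂ : 0 < v₂ := hv₁.trans_le hv
  have hq₂ : 0 < q₂ := hv₂.trans hv₂q₂
  have hquot : (q₁ / v₁) ^ (n - 1) ≤ (q₂ / v₂) ^ (n - 1) :=
    calc (q₁ / v₁) ^ (n - 1) ≤ 1 := pow_le_one₀ (by positivity) ((div_le_one hv₁).2 hq₁v₁)
      _ ≤ (q₂ / v₂) ^ (n - 1) := one_le_pow₀ ((one_le_div hv₂).2 hv₂q₂.le)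
  have hdet : q₁ * v₁ ^ (n - 1) < q₂ * v₂ ^ (n - 1) :=
    mul_lt_mul (hq₁v₁.trans_lt (hv.trans_lt hv₂q₂)) (pow_le_pow_left₀ hv₁.le hv _)
      (by positivity) (by positivity)
  have hlog : Real.log v₁ ≤ Real.log v₂ := Real.log_le_log hv₁ hv
  have hn' : (0 : ℝ) ≤ n - 1 := sub_nonneg.2 (by exact_mod_cast hn)
  have hh'lt := hh' (mem_Ioi.2 (by positivity)) (mem_Ioi.2 (by positivity)) hdet
  simp only [THat]
  linarith [mul_le_mul_of_nonneg_left hquot hκ.le,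
    mul_le_mul_of_nonneg_left hlog (mul_nonneg hn' hκ.le)]

lemma one_sub_pow_div_pow_nonneg {q v : ℝ} (hq : 0 ≤ q) (hqv : q ≤ v) (k : ℕ) :
    0 ≤ 1 - q ^ k / v ^ k := by
  rw [← div_pow, sub_nonneg]
  exact pow_le_one₀ (div_nonneg hq (hq.trans hqv)) (div_le_one_of_le₀ hqv (hq.trans hqv))

lemma one_sub_pow_div_pow_nonpos {q v : ℝ} (hv : 0 < v) (hvq : v ≤ q) (k : ℕ) :
    1 - q ^ k / v ^ k ≤ 0 := by
  rw [← div_pow, sub_nonpos]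
  exact one_le_pow₀ ((one_le_div hv).2 hvq)

lemma eventually_le_div_of_del_le {n : ℕ} {r r' : ℝ → ℝ} {c M : ℝ} (hc : 0 < c)
    (hr : Tendsto r (𝓝[>] 0) (𝓝 c)) (hM : ∀ᶠ R in 𝓝[>] 0, del n r r' R ≤ M) :
    ∀ᶠ R in 𝓝[>] 0, r' R ≤ r R / R := by
  have hv : Tendsto (fun R => r R / R) (𝓝[>] 0) atTop := by
    simpa only [div_eq_mul_inv] using hr.pos_mul_atTop hc tendsto_inv_nhdsGT_zero
  filter_upwards [hM, hv.eventually_ge_atTop (max M 1)] with R hδ hvR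
  have hv1 : 1 ≤ r R / R := (le_max_right _ _).trans hvR
  have hpow : r R / R ≤ r R / R * (r R / R) ^ (n - 1) :=
    le_mul_of_one_le_right (by linarith) (one_le_pow₀ hv1)
  by_contra! hlt
  have : r R / R * (r R / R) ^ (n - 1) < del n r r' R :=
    mul_lt_mul_of_pos_right hlt (by positivity)
  linarith [le_max_left M 1]

namespace ModRadialSol

variable {n : ℕ} {κ : ℝ} {h' r r' r'' : ℝ → ℝ}

lemma continuousOn_r (hr : ModRadialSol n κ h' r r' r'') : ContinuousOn r (Ioc 0 1) :=
  fun R hR => (hr.hasDeriv R hR).continuousWithinAt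

lemma continuousOn_r' (hr : ModRadialSol n κ h' r r' r'') : ContinuousOn r' (Ioc 0 1) :=
  fun R hR => (hr.hasDeriv2 R hR).continuousWithinAt

lemma hasDerivWithinAt_div (hr : ModRadialSol n κ h' r r' r'') {R : ℝ} (hR : R ∈ Ioc 0 1) :
    HasDerivWithinAt (fun s => r s / s) ((r' R * R - r R * 1) / R ^ 2) (Ioc 0 1) R :=
  (hr.hasDeriv R hR).div (hasDerivWithinAt_id R _) hR.1.ne'

lemma hasDerivWithinAt_THat (hr : ModRadialSol n κ h' r r' r'') (hn : 2 ≤ n) {R : ℝ}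
    (hR : R ∈ Ioc 0 1) :
    HasDerivWithinAt (fun s => THat n κ h' (r' s) (r s / s))
      (((n:ℝ) - 1) * κ * (r' R / r R) * (1 - (r' R) ^ (n - 1) / (r R / R) ^ (n - 1)))
      (Ioc 0 1) R := by
  have hquot : EqOn (fun s => THat n κ h' (r' s) (r s / s))
      (fun s => s ^ (n - 1) * PhiHat1 n κ h' (r' s) (r s / s) / r s ^ (n - 1)) (Ioc 0 1) := by
    intro s hs
    have hs0 := hs.1.ne'
    have hrs := (hr.pos s hs).ne'
    simp only [PhiHat1_eq_pow_mul_THat n κ h' (r' s) (div_ne_zero hrs hs0), div_pow]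
    field_simp
  have hrR := (hr.pos R hR).ne'
  refine (((hr.equil R hR).div ((hr.hasDeriv R hR).pow (n - 1)) (pow_ne_zero _ hrR)).congr
    (fun s hs => hquot hs) (hquot hR)).congr_deriv ?_
  obtain ⟨m, rfl⟩ : ∃ m, n = m + 2 := ⟨n - 2, by omega⟩
  simp only [PhiHat1, PhiHat2, show m + 2 - 1 = m + 1 by omega, show m + 2 - 2 = m by omega,
    show m + 1 - 1 = m by omega, Pi.pow_apply, div_pow]
  have hR0 := hR.1.ne'
  push_cast
  field_simp
  ring

lemma deriv_le_div (hr : ModRadialSol n κ h' r r' r'') (hn : 2 ≤ n) (hκ : 0 < κ)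
    (hh' : StrictMonoOn h' (Ioi 0)) (hsmall : ∀ᶠ R in 𝓝[>] 0, r' R ≤ r R / R) :
    ∀ R ∈ Ioc (0:ℝ) 1, r' R ≤ r R / R := by
  intro R₀ hR₀
  by_contra! hlt
  obtain ⟨a, hsmall_a, ha⟩ := (hsmall.and (Ioo_mem_nhdsGT hR₀.1)).exists
  have hv_cont : ContinuousOn (fun s => r s / s) (Ioc 0 1) :=
    hr.continuousOn_r.div continuousOn_id fun s hs => hs.1.ne'
  have hsub : ∀ {x : ℝ}, 0 < x → Icc x R₀ ⊆ Ioc 0 1 :=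
    fun hx t ht => ⟨hx.trans_le ht.1, ht.2.trans hR₀.2⟩
  obtain ⟨c, hc, hcle, hgt⟩ := exists_last_le_of_continuousOn ha.2.le
    (hr.continuousOn_r'.mono (hsub ha.1)) (hv_cont.mono (hsub ha.1)) hsmall_a
  have hc0 : 0 < c := ha.1.trans_le hc.1
  have hcR₀ : c < R₀ := hc.2.lt_of_ne (by rintro rfl; linarith)
  have hn' : (0:ℝ) ≤ n - 1 := sub_nonneg.2 (by exact_mod_cast (by omega : 1 ≤ n))
  have hv_mono : MonotoneOn (fun s => r s / s) (Icc c R₀) := by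
    refine monotoneOn_of_hasDerivWithinAt_of_nonneg (convex_Icc c R₀)
      (fun t ht => (hr.hasDerivWithinAt_div (hsub hc0 ht)).mono (hsub hc0)) fun t ht => ?_
    rw [interior_Icc] at ht
    have ht0 : 0 < t := hc0.trans ht.1
    have := (div_lt_iff₀ ht0).1 (hgt t ⟨ht.1, ht.2.le⟩)
    exact div_nonneg (by linarith) (sq_nonneg t)
  have hT_anti : AntitoneOn (fun s => THat n κ h' (r' s) (r s / s)) (Icc c R₀) := by
    refine antitoneOn_of_hasDerivWithinAt_of_nonpos (convex_Icc c R₀)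
      (fun t ht => (hr.hasDerivWithinAt_THat hn (hsub hc0 ht)).mono (hsub hc0)) fun t ht => ?_
    rw [interior_Icc] at ht
    have ht' : t ∈ Ioc 0 1 := hsub hc0 ⟨ht.1.le, ht.2.le⟩
    have hrt := hr.pos t ht'
    refine mul_nonpos_of_nonneg_of_nonpos
      (mul_nonneg (mul_nonneg hn' hκ.le) (div_nonneg (hr.derivPos t ht').le hrt.le))
      (one_sub_pow_div_pow_nonpos (div_pos hrt ht'.1) (hgt t ⟨ht.1, ht.2.le⟩).le _)
  have hcI : c ∈ Icc c R₀ := left_mem_Icc.2 hcR₀.le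
  have hR₀I : R₀ ∈ Icc c R₀ := right_mem_Icc.2 hcR₀.le
  exact (hT_anti hcI hR₀I hcR₀.le).not_gt <| THat_lt_THat (by omega) hκ hh'
    (hr.derivPos c (hsub hc0 hcI)) hcle (hv_mono hcI hR₀I hcR₀.le) hlt

end ModRadialSol

/-- along a solution of the modified equilibrium equation, the modified
Cauchy stress `T̂(r(·))` is `C¹` with
`(d/dR)T̂(r(R)) = (n−1)κ (r'/r)(1 − (r')^{n−1}/(r/R)^{n−1})`; in particular it is
monotone increasing for a cavitating solution. -/
theorem stmt13 (n : ℕ) (hn : 2 ≤ n) (κ : ℝ) (hκ : 0 < κ)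
    (h h' h'' : ℝ → ℝ) (hh : GoodH h h' h'')
    (r r' r'' : ℝ → ℝ) (hr : ModRadialSol n κ h' r r' r'') :
    (∀ R ∈ Set.Ioc (0:ℝ) 1,
      HasDerivWithinAt (fun s => THat n κ h' (r' s) (r s / s))
        (((n:ℝ) - 1) * κ * (r' R / r R) * (1 - (r' R) ^ (n - 1) / (r R / R) ^ (n - 1)))
        (Set.Ioc 0 1) R) ∧
    ContinuousOn (fun R => ((n:ℝ) - 1) * κ * (r' R / r R) *
        (1 - (r' R) ^ (n - 1) / (r R / R) ^ (n - 1))) (Set.Ioc 0 1) ∧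
    (ContinuousOn r (Set.Icc 0 1) → 0 < r 0 →
      (∃ M : ℝ, ∀ R ∈ Set.Ioc (0:ℝ) 1, del n r r' R ≤ M) →
      MonotoneOn (fun R => THat n κ h' (r' R) (r R / R)) (Set.Ioc 0 1)) := by
  have hderiv := fun R (hR : R ∈ Ioc (0:ℝ) 1) => hr.hasDerivWithinAt_THat hn hR
  have hv_pos : ∀ R ∈ Ioc (0:ℝ) 1, 0 < r R / R := fun R hR => div_pos (hr.pos R hR) hR.1
  refine ⟨hderiv, ?_, ?_⟩
  · have hv := hr.continuousOn_r.div continuousOn_id fun R hR => hR.1.ne'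
    exact (continuousOn_const.mul (hr.continuousOn_r'.div hr.continuousOn_r
      fun R hR => (hr.pos R hR).ne')).mul (continuousOn_const.sub ((hr.continuousOn_r'.pow _).div
        (hv.pow _) fun R hR => pow_ne_zero _ (hv_pos R hR).ne'))
  rintro hrc hr0 ⟨M, hM⟩
  have hr_lim : Tendsto r (𝓝[>] 0) (𝓝 (r 0)) := by
    rw [← nhdsWithin_Ioc_eq_nhdsGT zero_lt_one]
    exact (hrc 0 (left_mem_Icc.2 zero_le_one)).mono Ioc_subset_Icc_self
  have hle := hr.deriv_le_div hn hκ hh.strictMonoOn_deriv_s13 <|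
    eventually_le_div_of_del_le hr0 hr_lim (eventually_of_mem (Ioc_mem_nhdsGT one_pos) hM)
  have hn' : (0:ℝ) ≤ n - 1 := sub_nonneg.2 (by exact_mod_cast (by omega : 1 ≤ n))
  refine monotoneOn_of_hasDerivWithinAt_of_nonneg (convex_Ioc 0 1) hderiv fun R hR => ?_
  have hR' : R ∈ Ioc (0:ℝ) 1 := interior_subset hR
  exact mul_nonneg (mul_nonneg (mul_nonneg hn' hκ.le) (div_nonneg (hr.derivPos R hR').le
    (hr.pos R hR').le)) (one_sub_pow_div_pow_nonneg (hr.derivPos R hR').le (hle R hR') _)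

end
end
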